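/- Let T be a finite tree rooted at a vertex r, let S be a dominating set of T, let A ⊆ a_1(S) be a set all of whose vertices have the same depth in T, let N be the set of vertices of N_1(S) having a neighbour in A, and let S' = (S \ A) ∪ N. Assume further that S' is a dominating set of T and that every vertex of N is a child of some vertex in A. Then (iii) no vertex of N is adjacent to any other vertex of S', and hence N ⊆ a(S'); and (iv) every vertex x ∈ a(S) that is supported in S' (i.e., x ∈ S' \ a(S')) is a grandchild of some vertex of N and its parent is not in S'. -/

import Mathlib

/-
Every vertex of `N` lies in `N₁(S)` and so sees exactly one vertex of `S`, which is in `A`;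
and all vertices of `N` are children of vertices of `A`, hence have the same depth, so no two of
them are adjacent in the tree. This gives (iii).

For (iv), let `x ∈ a(S)` be supported in `S'` and let `y` be a private neighbour of `x` for `S`,
i.e. `N[y] ∩ S = {x}`. As `S' \ {x}` still dominates `y`, some `w ∈ N` is adjacent to `y`, and
`y ≠ x` by (iii). Now `w` is a child of its unique `S`-neighbour `u ∈ A`, and `y ∉ S`, so `y` is
a child of `w`; likewise `x ∈ S` is not the parent `w ∉ S` of `y`, so `x` is a child of `y`.
The parent `y` of `x` is neither in `S` nor in `N`, since its only `S`-neighbour `x` is not in `A`.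
-/

open scoped Classical

variable {V : Type*} [Fintype V] [DecidableEq V]

/-- `S` is a dominating set of `G`: every vertex is in `S` or adjacent to a vertex of `S`. -/
def IsDomSet (G : SimpleGraph V) (S : Finset V) : Prop :=
  ∀ v : V, v ∈ S ∨ ∃ u ∈ S, G.Adj u v

/-- `S` is a minimal dominating set: it is dominating and no proper subset is dominating. -/
def MinimalDomSet (G : SimpleGraph V) (S : Finset V) : Prop :=
  IsDomSet G S ∧ ∀ T : Finset V, T ⊂ S → ¬ IsDomSet G T

/-- `d_i(G)`: the number of dominating sets of `G` of cardinality `i`. -/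
noncomputable def domCount (G : SimpleGraph V) (i : ℕ) : ℕ :=
  (Finset.univ.filter fun S : Finset V => IsDomSet G S ∧ S.card = i).card

/-- `a(S)`: the set of critical vertices of a dominating set `S`. -/
noncomputable def aSet (G : SimpleGraph V) (S : Finset V) : Finset V :=
  S.filter fun v => ¬ IsDomSet G (S.erase v)

/-- `a(G,i)`: the sum of `|a(S)|` over all dominating sets `S` of cardinality `i`. -/
noncomputable def aTotal (G : SimpleGraph V) (i : ℕ) : ℕ :=
  ∑ S ∈ Finset.univ.filter (fun S : Finset V => IsDomSet G S ∧ S.card = i), (aSet G S).card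

/-- `γ(G)`: the minimum cardinality of a dominating set. -/
noncomputable def gamma (G : SimpleGraph V) : ℕ :=
  sInf {k | ∃ S : Finset V, IsDomSet G S ∧ S.card = k}

/-- `Γ(G)`: the maximum cardinality of a minimal dominating set. -/
noncomputable def bigGamma (G : SimpleGraph V) : ℕ :=
  sSup {k | ∃ S : Finset V, MinimalDomSet G S ∧ S.card = k}

/-- The closed neighbourhood `N[v]` as a finset. -/
noncomputable def closedNbhd (G : SimpleGraph V) (v : V) : Finset V :=
  Finset.univ.filter fun u => u = v ∨ G.Adj v u

/-- `N_1(S)`: vertices outside `S` with exactly one closed neighbour in `S`. -/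
noncomputable def N1Set (G : SimpleGraph V) (S : Finset V) : Finset V :=
  Finset.univ.filter fun v => v ∉ S ∧ (closedNbhd G v ∩ S).card = 1

/-- `N_2(S)`: vertices outside `S` with at least two closed neighbours in `S`. -/
noncomputable def N2Set (G : SimpleGraph V) (S : Finset V) : Finset V :=
  Finset.univ.filter fun v => v ∉ S ∧ 2 ≤ (closedNbhd G v ∩ S).card

/-- `a_1(S)`: critical vertices whose closed neighbourhood meets `N_1(S)`. -/
noncomputable def a1Set (G : SimpleGraph V) (S : Finset V) : Finset V :=
  (aSet G S).filter fun v => (closedNbhd G v ∩ N1Set G S).Nonempty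

/-- `a_2(S)`: critical vertices whose closed neighbourhood misses `N_1(S)`. -/
noncomputable def a2Set (G : SimpleGraph V) (S : Finset V) : Finset V :=
  (aSet G S).filter fun v => closedNbhd G v ∩ N1Set G S = ∅

/-- In the tree `G` rooted at `r`, `x` is a descendant of `y`:
`y` lies on the unique path from `x` to the root `r`. -/
def Descendant (G : SimpleGraph V) (r x y : V) : Prop :=
  G.dist x r = G.dist x y + G.dist y r

/-- `x` is a child of `y` in `G` rooted at `r`. -/
def IsChild (G : SimpleGraph V) (r x y : V) : Prop :=
  Descendant G r x y ∧ G.dist y x = 1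

/-- `p` is the parent of `x` in `G` rooted at `r`. -/
def IsParent (G : SimpleGraph V) (r p x : V) : Prop :=
  IsChild G r x p

/-- `x` is a grandchild of `y` in `G` rooted at `r`. -/
def IsGrandchild (G : SimpleGraph V) (r x y : V) : Prop :=
  Descendant G r x y ∧ G.dist y x = 2


section RootedTree

variable {W : Type*} {G : SimpleGraph W} {r : W}

lemma isChild_iff {c p : W} : IsChild G r c p ↔ G.Adj p c ∧ G.dist r c = G.dist r p + 1 := by
  rw [IsChild, Descendant, SimpleGraph.dist_eq_one_iff_adj, and_comm, and_congr_right_iff]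
  intro hadj
  rw [SimpleGraph.dist_comm (u := c) (v := p), SimpleGraph.dist_eq_one_iff_adj.2 hadj,
    SimpleGraph.dist_comm (u := c), SimpleGraph.dist_comm (u := p)]
  omega

lemma IsChild.isGrandchild (hG : G.Connected) {x y w : W} (hxy : IsChild G r x y)
    (hyw : IsChild G r y w) : IsGrandchild G r x w := by
  obtain ⟨hadj₁, hd₁⟩ := isChild_iff.1 hxy
  obtain ⟨hadj₂, hd₂⟩ := isChild_iff.1 hyw
  have hwy := SimpleGraph.dist_eq_one_iff_adj.2 hadj₂
  have hyx := SimpleGraph.dist_eq_one_iff_adj.2 hadj₁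
  have h₁ : G.dist r x ≤ G.dist r w + G.dist w x := hG.dist_triangle
  have h₂ : G.dist w x ≤ G.dist w y + G.dist y x := hG.dist_triangle
  have hwx : G.dist w x = 2 := by omega
  refine ⟨?_, hwx⟩
  rw [Descendant, G.dist_comm (u := x) (v := r), G.dist_comm (u := x) (v := w),
    G.dist_comm (u := w) (v := r)]
  omega

/-- Every parent of `x` is the penultimate vertex of the unique path from the root to `x`. -/
lemma SimpleGraph.IsTree.eq_of_isChild (hT : G.IsTree) {x y y' : W} (hy : IsChild G r x y)
    (hy' : IsChild G r x y') : y = y' := by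
  have eq_penultimate :
      ∀ {y}, IsChild G r x y → ∀ p : G.Walk r x, p.IsPath → y = p.penultimate := by
    intro y hy p hp
    obtain ⟨hadj, hd⟩ := isChild_iff.1 hy
    obtain ⟨q, hq, hql⟩ := (hT.connected r y).exists_path_of_dist
    have hx : x ∉ q.support := fun hx => by
      have := (G.dist_le (q.takeUntil x hx)).trans (q.length_takeUntil_le_length hx)
      omega
    exact hT.isAcyclic.eq_penultimate_of_adj_end hp hadj.symm
      (hT.isAcyclic.mem_support_of_ne_mem_support_of_adj_of_isPath hp hq hadj.symm hx)
  obtain ⟨p, hp, -⟩ := (hT.connected r x).exists_path_of_dist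
  rw [eq_penultimate hy p hp, eq_penultimate hy' p hp]

lemma SimpleGraph.IsTree.isChild_of_adj (hT : G.IsTree) {w u y : W} (hwu : IsChild G r w u)
    (hwy : G.Adj w y) (hyu : y ≠ u) : IsChild G r y w := by
  rcases hT.dist_eq_dist_add_one_of_adj r hwy with h | h
  · exact absurd (hT.eq_of_isChild (isChild_iff.2 ⟨hwy.symm, h⟩) hwu) hyu
  · exact isChild_iff.2 ⟨hwy, h⟩

end RootedTree

section Domination

variable {G : SimpleGraph V} {S : Finset V}

lemma mem_closedNbhd {u v : V} : u ∈ closedNbhd G v ↔ u = v ∨ G.Adj v u := by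
  simp [closedNbhd]

lemma mem_closedNbhd_comm {u v : V} : u ∈ closedNbhd G v ↔ v ∈ closedNbhd G u := by
  simp only [mem_closedNbhd, eq_comm, G.adj_comm]

lemma isDomSet_iff : IsDomSet G S ↔ ∀ v, ∃ u ∈ S, v ∈ closedNbhd G u := by
  refine forall_congr' fun v => ?_
  simp only [mem_closedNbhd]
  constructor
  · rintro (hv | ⟨u, hu, huv⟩)
    exacts [⟨v, hv, .inl rfl⟩, ⟨u, hu, .inr huv⟩]
  · rintro ⟨u, hu, rfl | huv⟩
    exacts [.inl hu, .inr ⟨u, hu, huv⟩]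

omit [Fintype V] in
lemma isDomSet_erase_of_notMem_aSet {x : V} (hx : x ∈ S) (hx' : x ∉ aSet G S) :
    IsDomSet G (S.erase x) :=
  not_not.1 fun h => hx' (Finset.mem_filter.2 ⟨hx, h⟩)

omit [Fintype V] in
lemma mem_aSet_of_forall_not_adj {v : V} (hv : v ∈ S) (h : ∀ u ∈ S, ¬ G.Adj v u) :
    v ∈ aSet G S := by
  refine Finset.mem_filter.2 ⟨hv, fun hdom => ?_⟩
  rcases hdom v with hv' | ⟨u, hu, huv⟩
  · exact Finset.notMem_erase v S hv'
  · exact h u (Finset.mem_of_mem_erase hu) huv.symm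

lemma exists_closedNbhd_inter_eq_singleton_of_mem_aSet (hS : IsDomSet G S) {x : V}
    (hx : x ∈ aSet G S) : ∃ y, closedNbhd G y ∩ S = {x} := by
  obtain ⟨hxS, hcrit⟩ := Finset.mem_filter.1 hx
  rw [isDomSet_iff] at hS hcrit
  push Not at hcrit
  obtain ⟨y, hy⟩ := hcrit
  obtain ⟨u, huS, hyu⟩ := hS y
  refine ⟨y, Finset.eq_singleton_iff_unique_mem.2 ⟨?_, fun w hw => ?_⟩⟩
  · obtain rfl : u = x := by_contra fun hux => hy u (Finset.mem_erase.2 ⟨hux, huS⟩) hyu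
    exact Finset.mem_inter.2 ⟨mem_closedNbhd_comm.1 hyu, huS⟩
  · obtain ⟨hwy, hwS⟩ := Finset.mem_inter.1 hw
    exact by_contra fun hwx => hy w (Finset.mem_erase.2 ⟨hwx, hwS⟩) (mem_closedNbhd_comm.1 hwy)

lemma closedNbhd_inter_eq_singleton_of_mem_N1Set {u v : V} (hv : v ∈ N1Set G S) (hu : u ∈ S)
    (huv : G.Adj u v) : closedNbhd G v ∩ S = {u} := by
  obtain ⟨a, ha⟩ := Finset.card_eq_one.1 (Finset.mem_filter.1 hv).2.2
  have hmem : u ∈ closedNbhd G v ∩ S :=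
    Finset.mem_inter.2 ⟨mem_closedNbhd.2 (.inr huv.symm), hu⟩
  rw [ha, Finset.mem_singleton] at hmem
  rw [ha, hmem]

lemma adj_and_notMem_of_closedNbhd_inter_eq_singleton {x y : V}
    (hy : closedNbhd G y ∩ S = {x}) (hyx : y ≠ x) : G.Adj y x ∧ y ∉ S := by
  have hx : x ∈ closedNbhd G y := (Finset.mem_inter.1 (hy ▸ Finset.mem_singleton_self x)).1
  refine ⟨(mem_closedNbhd.1 hx).resolve_left hyx.symm, fun hyS => hyx ?_⟩
  exact Finset.mem_singleton.1 (hy ▸ Finset.mem_inter.2 ⟨mem_closedNbhd.2 (.inl rfl), hyS⟩)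

end Domination

/-- The set `N` of the theorem. -/
noncomputable def N1SetAdj (G : SimpleGraph V) (S A : Finset V) : Finset V :=
  (N1Set G S).filter fun v => ∃ u ∈ A, G.Adj u v

section MoveA1

variable {G : SimpleGraph V} {S A : Finset V}

lemma notMem_of_mem_N1SetAdj {v : V} (hv : v ∈ N1SetAdj G S A) : v ∉ S :=
  (Finset.mem_filter.1 (Finset.mem_filter.1 hv).1).2.1

lemma exists_closedNbhd_inter_eq_of_mem_N1SetAdj (hAS : A ⊆ S) {v : V}
    (hv : v ∈ N1SetAdj G S A) : ∃ u ∈ A, closedNbhd G v ∩ S = {u} := by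
  obtain ⟨hv, u, hu, huv⟩ := Finset.mem_filter.1 hv
  exact ⟨u, hu, closedNbhd_inter_eq_singleton_of_mem_N1Set hv (hAS hu) huv⟩

lemma notMem_N1SetAdj_of_closedNbhd_inter_eq (hAS : A ⊆ S) {x y : V}
    (hy : closedNbhd G y ∩ S = {x}) (hx : x ∉ A) : y ∉ N1SetAdj G S A := fun hyN => by
  obtain ⟨u, hu, huy⟩ := exists_closedNbhd_inter_eq_of_mem_N1SetAdj hAS hyN
  rw [hy, Finset.singleton_inj] at huy
  exact hx (huy ▸ hu)

/-- A vertex of `N` sees only its `A`-neighbour in `S`, and all vertices of `N` are children of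
vertices of equal depth, so have equal depth, which adjacent vertices of a tree never do. -/
lemma not_adj_of_mem_N1SetAdj (hT : G.IsTree) {r : V} (hAS : A ⊆ S)
    (hdepth : ∀ x ∈ A, ∀ y ∈ A, G.dist r x = G.dist r y)
    (hchild : ∀ v ∈ N1SetAdj G S A, ∃ u ∈ A, IsChild G r v u) {v w : V}
    (hv : v ∈ N1SetAdj G S A) (hw : w ∈ S \ A ∪ N1SetAdj G S A) : ¬ G.Adj v w := by
  intro hvw
  rcases Finset.mem_union.1 hw with hw | hw
  · obtain ⟨hwS, hwA⟩ := Finset.mem_sdiff.1 hw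
    obtain ⟨u, hu, hvu⟩ := exists_closedNbhd_inter_eq_of_mem_N1SetAdj hAS hv
    have hwu : w ∈ closedNbhd G v ∩ S :=
      Finset.mem_inter.2 ⟨mem_closedNbhd.2 (.inr hvw), hwS⟩
    rw [hvu, Finset.mem_singleton] at hwu
    exact hwA (hwu ▸ hu)
  · obtain ⟨u, hu, hvu⟩ := hchild v hv
    obtain ⟨u', hu', hwu'⟩ := hchild w hw
    have := (isChild_iff.1 hvu).2
    have := (isChild_iff.1 hwu').2
    have := hdepth u hu u' hu'
    exact hT.dist_ne_of_adj r hvw (by omega)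

lemma exists_mem_N1SetAdj_adj (hAS : A ⊆ S) {x y : V} (hy : closedNbhd G y ∩ S = {x})
    (hx : x ∉ A) (hdom : IsDomSet G ((S \ A ∪ N1SetAdj G S A).erase x)) :
    ∃ w ∈ N1SetAdj G S A, G.Adj w y := by
  obtain ⟨w, hw, hyw⟩ := isDomSet_iff.1 hdom y
  obtain ⟨hwx, hw⟩ := Finset.mem_erase.1 hw
  rcases Finset.mem_union.1 hw with hw | hw
  · have : w ∈ closedNbhd G y ∩ S :=
      Finset.mem_inter.2 ⟨mem_closedNbhd_comm.1 hyw, (Finset.mem_sdiff.1 hw).1⟩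
    rw [hy, Finset.mem_singleton] at this
    exact absurd this hwx
  · rcases mem_closedNbhd.1 hyw with rfl | hwy
    · exact absurd hw (notMem_N1SetAdj_of_closedNbhd_inter_eq hAS hy hx)
    · exact ⟨w, hw, hwy⟩

end MoveA1

theorem move_a1_to_n1_part_iii_iv_general (G : SimpleGraph V) (hT : G.IsTree) (r : V)
    (S : Finset V) (hS : IsDomSet G S)
    (A : Finset V) (hA : A ⊆ a1Set G S)
    (hdepth : ∀ x ∈ A, ∀ y ∈ A, G.dist r x = G.dist r y)
    (N S' : Finset V)
    (hN : N = (N1Set G S).filter fun v => ∃ u ∈ A, G.Adj u v)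
    (hS' : S' = (S \ A) ∪ N)
    (hchild : ∀ v ∈ N, ∃ u ∈ A, IsChild G r v u) :
    ((∀ v ∈ N, ∀ u ∈ S', ¬ G.Adj v u) ∧ N ⊆ aSet G S') ∧
      ∀ x ∈ aSet G S, x ∈ S' \ aSet G S' →
        (∃ u ∈ N, IsGrandchild G r x u) ∧ ∀ p : V, IsParent G r p x → p ∉ S' := by
  change N = N1SetAdj G S A at hN
  subst hN hS'
  have hAS : A ⊆ S := fun u hu => (Finset.mem_filter.1 (Finset.mem_filter.1 (hA hu)).1).1
  have hNS' : ∀ v ∈ N1SetAdj G S A, ∀ u ∈ S \ A ∪ N1SetAdj G S A, ¬ G.Adj v u :=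
    fun _ hv _ hu => not_adj_of_mem_N1SetAdj hT hAS hdepth hchild hv hu
  refine ⟨⟨hNS', fun v hv =>
    mem_aSet_of_forall_not_adj (Finset.mem_union_right _ hv) (hNS' v hv)⟩, fun x hx hx' => ?_⟩
  obtain ⟨hxS', hxa'⟩ := Finset.mem_sdiff.1 hx'
  have hxS : x ∈ S := (Finset.mem_filter.1 hx).1
  have hxA : x ∉ A := fun hxA => by
    rcases Finset.mem_union.1 hxS' with h | h
    exacts [(Finset.mem_sdiff.1 h).2 hxA, notMem_of_mem_N1SetAdj h hxS]
  obtain ⟨y, hy⟩ := exists_closedNbhd_inter_eq_singleton_of_mem_aSet hS hx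
  obtain ⟨w, hw, hwy⟩ :=
    exists_mem_N1SetAdj_adj hAS hy hxA (isDomSet_erase_of_notMem_aSet hxS' hxa')
  obtain ⟨u, hu, hwu⟩ := hchild w hw
  have hyx : y ≠ x := by
    rintro rfl
    exact hNS' w hw y hxS' hwy
  obtain ⟨hadj, hyS⟩ := adj_and_notMem_of_closedNbhd_inter_eq_singleton hy hyx
  have hyw : IsChild G r y w := hT.isChild_of_adj hwu hwy (ne_of_mem_of_not_mem (hAS hu) hyS).symm
  have hxy : IsChild G r x y :=
    hT.isChild_of_adj hyw hadj (ne_of_mem_of_not_mem hxS (notMem_of_mem_N1SetAdj hw))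
  refine ⟨⟨w, hw, hxy.isGrandchild hT.connected hyw⟩, fun p hp => ?_⟩
  rw [hT.eq_of_isChild hp hxy, Finset.mem_union, Finset.mem_sdiff, not_or, not_and_or]
  exact ⟨.inl hyS, notMem_N1SetAdj_of_closedNbhd_inter_eq hAS hy hxA⟩

theorem move_a1_to_n1_part_iii_iv (G : SimpleGraph V) (hT : G.IsTree) (r : V)
    (S : Finset V) (hS : IsDomSet G S)
    (A : Finset V) (hA : A ⊆ a1Set G S)
    (hdepth : ∀ x ∈ A, ∀ y ∈ A, G.dist r x = G.dist r y)
    (N S' : Finset V)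
    (hN : N = (N1Set G S).filter fun v => ∃ u ∈ A, G.Adj u v)
    (hS' : S' = (S \ A) ∪ N)
    (hS'dom : IsDomSet G S')
    (hchild : ∀ v ∈ N, ∃ u ∈ A, IsChild G r v u) :
    ((∀ v ∈ N, ∀ u ∈ S', ¬ G.Adj v u) ∧ N ⊆ aSet G S') ∧
      ∀ x ∈ aSet G S, x ∈ S' \ aSet G S' →
        (∃ u ∈ N, IsGrandchild G r x u) ∧ ∀ p : V, IsParent G r p x → p ∉ S' :=
  move_a1_to_n1_part_iii_iv_general G hT r S hS A hA hdepth N S' hN hS' hchild
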